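/- For every integer d ≥ 2, the map Ψ : D^{d-1} → SC_d(2,0;o) defined by Ψ(x) = ((x/2 + P_{1/4}, 1/4), ((−x_1/2, …, −x_{d-1}/2, 1/4), 1/4)) is well defined, i.e. for every x ∈ D^{d-1} both balls are contained in the closed upper unit semiball and are nonoverlapping; moreover π_c ∘ Ψ = J⁺, where J⁺ : D^{d-1} → S^{d-1} is given by J⁺(x) = x'/‖x'‖ with x' = (x_1, …, x_{d-1}, x_d/2). -/

import Mathlib

noncomputable section

/-- The last index of `Fin d` (corresponding to the last coordinate `x_d`). -/
def lastIdx (d : ℕ) (hd : 2 ≤ d) : Fin d := ⟨d - 1, by omega⟩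

/-- The point `P_{1/4} = (0, …, 0, 1/4)` of `ℝ^d`. -/
def Pquarter (d : ℕ) (hd : 2 ≤ d) : EuclideanSpace ℝ (Fin d) :=
  EuclideanSpace.single (lastIdx d hd) 4⁻¹

/-- The configuration space `SC_d(2,0;o)` of two nonoverlapping balls in the closed
upper unit semiball of `ℝ^d`. -/
def SC20o (d : ℕ) (hd : 2 ≤ d) :
    Set ((EuclideanSpace ℝ (Fin d) × ℝ) × (EuclideanSpace ℝ (Fin d) × ℝ)) :=
  {c | 0 < c.1.2 ∧ 0 < c.2.2 ∧
       c.1.1 (lastIdx d hd) ≥ c.1.2 ∧ c.2.1 (lastIdx d hd) ≥ c.2.2 ∧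
       ‖c.1.1‖ + c.1.2 ≤ 1 ∧ ‖c.2.1‖ + c.2.2 ≤ 1 ∧
       ‖c.1.1 - c.2.1‖ ≥ c.1.2 + c.2.2}

/-- The closed disc `D^{d-1} = {x ∈ S^{d-1} : x_d ≥ 0}`. -/
def upperHemi (d : ℕ) (hd : 2 ≤ d) : Set (EuclideanSpace ℝ (Fin d)) :=
  {z | ‖z‖ = 1 ∧ z (lastIdx d hd) ≥ 0}

/-- The raw formula of the projection `π_c`, sending `((x,r),(y,s))` to `(x−y)/‖x−y‖`. -/
def rawPi (d : ℕ) :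
    (EuclideanSpace ℝ (Fin d) × ℝ) × (EuclideanSpace ℝ (Fin d) × ℝ) →
      EuclideanSpace ℝ (Fin d) :=
  fun c => ‖c.1.1 - c.2.1‖⁻¹ • (c.1.1 - c.2.1)

/-- The raw formula of `Ψ = ψ_o ∘₁ f`, sending `x` to
`((x/2 + P_{1/4}, 1/4), ((−x_1/2, …, −x_{d-1}/2, 1/4), 1/4))`; the second center is
`−x/2` with its last coordinate replaced by `1/4`. -/
def bigPsi (d : ℕ) (hd : 2 ≤ d) :
    EuclideanSpace ℝ (Fin d) →
      (EuclideanSpace ℝ (Fin d) × ℝ) × (EuclideanSpace ℝ (Fin d) × ℝ) :=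
  fun x =>
    (((2 : ℝ)⁻¹ • x + Pquarter d hd, 4⁻¹),
     (-((2 : ℝ)⁻¹ • x) +
        EuclideanSpace.single (lastIdx d hd) (x (lastIdx d hd) / 2 + 4⁻¹), 4⁻¹))

/-- The vector `x' = (x_1, …, x_{d-1}, x_d/2)`, i.e. `x` with its last coordinate
halved. -/
def halveLast (d : ℕ) (hd : 2 ≤ d) :
    EuclideanSpace ℝ (Fin d) → EuclideanSpace ℝ (Fin d) :=
  fun x => x - EuclideanSpace.single (lastIdx d hd) (x (lastIdx d hd) / 2)

/-- The raw formula of `J⁺ : D^{d-1} → S^{d-1}`, `x ↦ x'/‖x'‖` with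
`x' = (x_1, …, x_{d-1}, x_d/2)`. -/
def Jplus (d : ℕ) (hd : 2 ≤ d) :
    EuclideanSpace ℝ (Fin d) → EuclideanSpace ℝ (Fin d) :=
  fun x => ‖halveLast d hd x‖⁻¹ • halveLast d hd x

/-!
The difference of the two centers of `Ψ(x)` is exactly `x'`, which gives `π_c ∘ Ψ = J⁺`. With
`t = x_d ∈ [0, 1]` on `D^{d-1}`, the centers have squared norms `1/4 + t/4 + 1/16` and
`5/16 - t²/4`, both at most `(3/4)²`, and `x'` has squared norm `1 - 3t²/4 ≥ (1/2)²`; so the two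
balls of radius `1/4` fit in the unit ball without overlapping. Their centers have heights
`t/2 + 1/4` and `1/4`.
-/

open scoped InnerProductSpace

lemma real_inner_single_right {ι : Type*} [Fintype ι] [DecidableEq ι]
    (x : EuclideanSpace ℝ ι) (i : ι) (a : ℝ) :
    ⟪x, EuclideanSpace.single i a⟫_ℝ = a * x i := by
  simp [EuclideanSpace.inner_single_right]

section

variable {d : ℕ} {hd : 2 ≤ d}

lemma bigPsi_fst_sub_snd (x : EuclideanSpace ℝ (Fin d)) :
    (bigPsi d hd x).1.1 - (bigPsi d hd x).2.1 = halveLast d hd x := by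
  ext i
  simp only [bigPsi, halveLast, Pquarter, PiLp.sub_apply, PiLp.add_apply, PiLp.neg_apply,
    PiLp.smul_apply, PiLp.single_apply, smul_eq_mul]
  split_ifs <;> ring

lemma rawPi_bigPsi (x : EuclideanSpace ℝ (Fin d)) :
    rawPi d (bigPsi d hd x) = Jplus d hd x := by
  rw [rawPi, Jplus, bigPsi_fst_sub_snd]

lemma bigPsi_fst_lastIdx (x : EuclideanSpace ℝ (Fin d)) :
    (bigPsi d hd x).1.1 (lastIdx d hd) = x (lastIdx d hd) / 2 + 4⁻¹ := by
  simp only [bigPsi, Pquarter, PiLp.add_apply, PiLp.smul_apply, PiLp.single_apply,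
    if_true, smul_eq_mul]
  ring

lemma bigPsi_snd_lastIdx (x : EuclideanSpace ℝ (Fin d)) :
    (bigPsi d hd x).2.1 (lastIdx d hd) = 4⁻¹ := by
  simp only [bigPsi, PiLp.add_apply, PiLp.neg_apply, PiLp.smul_apply,
    PiLp.single_apply, if_true, smul_eq_mul]
  ring

lemma norm_bigPsi_fst_sq (x : EuclideanSpace ℝ (Fin d)) :
    ‖(bigPsi d hd x).1.1‖ ^ 2 = ‖x‖ ^ 2 / 4 + x (lastIdx d hd) / 4 + 1 / 16 := by
  rw [bigPsi, norm_add_sq_real, real_inner_smul_left, Pquarter, real_inner_single_right,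
    norm_smul, PiLp.norm_single, norm_inv, norm_inv, RCLike.norm_ofNat, RCLike.norm_ofNat]
  ring

lemma norm_bigPsi_snd_sq (x : EuclideanSpace ℝ (Fin d)) :
    ‖(bigPsi d hd x).2.1‖ ^ 2 = ‖x‖ ^ 2 / 4 + 1 / 16 - x (lastIdx d hd) ^ 2 / 4 := by
  rw [bigPsi, norm_add_sq_real, inner_neg_left, real_inner_smul_left, real_inner_single_right,
    norm_neg, norm_smul, PiLp.norm_single, norm_inv, RCLike.norm_ofNat, Real.norm_eq_abs, sq_abs]
  ring

lemma norm_halveLast_sq (x : EuclideanSpace ℝ (Fin d)) :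
    ‖halveLast d hd x‖ ^ 2 = ‖x‖ ^ 2 - 3 / 4 * x (lastIdx d hd) ^ 2 := by
  rw [halveLast, norm_sub_sq_real, real_inner_single_right, PiLp.norm_single,
    Real.norm_eq_abs, sq_abs]
  ring

lemma mem_SC20o_of_radii_eq_quarter
    {c : (EuclideanSpace ℝ (Fin d) × ℝ) × (EuclideanSpace ℝ (Fin d) × ℝ)}
    (hr₁ : c.1.2 = 4⁻¹) (hr₂ : c.2.2 = 4⁻¹)
    (hlast₁ : 4⁻¹ ≤ c.1.1 (lastIdx d hd)) (hlast₂ : 4⁻¹ ≤ c.2.1 (lastIdx d hd))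
    (hnorm₁ : ‖c.1.1‖ ^ 2 ≤ 9 / 16) (hnorm₂ : ‖c.2.1‖ ^ 2 ≤ 9 / 16)
    (hdist : 1 / 4 ≤ ‖c.1.1 - c.2.1‖ ^ 2) :
    c ∈ SC20o d hd := by
  refine ⟨by norm_num [hr₁], by norm_num [hr₂], hr₁ ▸ hlast₁, hr₂ ▸ hlast₂, ?_, ?_, ?_⟩
  · nlinarith [norm_nonneg c.1.1]
  · nlinarith [norm_nonneg c.2.1]
  · nlinarith [norm_nonneg (c.1.1 - c.2.1)]

lemma bigPsi_mem_SC20o {x : EuclideanSpace ℝ (Fin d)} (hx : x ∈ upperHemi d hd) :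
    bigPsi d hd x ∈ SC20o d hd := by
  obtain ⟨hnorm, hlast_nonneg⟩ := hx
  have hlast_le_one : x (lastIdx d hd) ≤ 1 :=
    hnorm ▸ (le_abs_self _).trans (PiLp.norm_apply_le x (lastIdx d hd))
  refine mem_SC20o_of_radii_eq_quarter rfl rfl ?_ ?_ ?_ ?_ ?_
  · rw [bigPsi_fst_lastIdx]
    linarith
  · rw [bigPsi_snd_lastIdx]
  · rw [norm_bigPsi_fst_sq, hnorm]
    linarith
  · rw [norm_bigPsi_snd_sq, hnorm]
    nlinarith
  · rw [bigPsi_fst_sub_snd, norm_halveLast_sq, hnorm]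
    nlinarith

end

theorem swissCheese_bigPsi_wellDefined_and_projects_to_Jplus (d : ℕ) (hd : 2 ≤ d) :
    (∀ x ∈ upperHemi d hd, bigPsi d hd x ∈ SC20o d hd) ∧
    (∀ x ∈ upperHemi d hd, rawPi d (bigPsi d hd x) = Jplus d hd x) :=
  ⟨fun _ hx => bigPsi_mem_SC20o hx, fun x _ => rawPi_bigPsi x⟩
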